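/- arXiv:1903.07425 — 3 statements merged into one kernel-verified Lean document; each statement's English description precedes it below -/
import Mathlib

section
/- For all real numbers λ, s, σ with 0 < λ ≤ 1 and 0 < s ≤ σ ≤ 1, one has 0 ≤ ((s + σ)/s)·(1 − λ^s) and ((s + σ)/s)·(1 − λ^s) ≤ λ^(−σ), where λ^s and λ^(−σ) denote real powers (Real.rpow). -/
/-! With `x = λ^s ∈ (0, 1]` and `r = σ/s ≥ 1` one has `(s + σ)/s = 1 + r` and `λ^(-σ) = (x⁻¹)^r`,
so the upper bound is `(1 + r)(1 - x) ≤ (x⁻¹)^r`. Bernoulli's inequality bounds the right-hand side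
below by `1 + r (x⁻¹ - 1)`, which exceeds the left-hand side by `x + r (1 - x)² / x ≥ 0`. -/

open Real

lemma one_add_mul_one_sub_le_inv_rpow {x r : ℝ} (hx : 0 < x) (hr : 1 ≤ r) :
    (1 + r) * (1 - x) ≤ x⁻¹ ^ r := by
  have bernoulli : 1 + r * (x⁻¹ - 1) ≤ x⁻¹ ^ r := by
    simpa using one_add_mul_self_le_rpow_one_add (s := x⁻¹ - 1) (by simp [hx.le]) hr
  have gap : (1 + r) * (1 - x) + (x + r * (1 - x) ^ 2 / x) = 1 + r * (x⁻¹ - 1) := by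
    field_simp
    ring
  have : 0 ≤ x + r * (1 - x) ^ 2 / x := by positivity
  linarith

theorem stmt_0_general (lam s σ : ℝ) (hlam0 : 0 < lam) (hlam1 : lam ≤ 1)
    (hs : 0 < s) (hsσ : s ≤ σ) :
    0 ≤ ((s + σ) / s) * (1 - lam ^ s) ∧
      ((s + σ) / s) * (1 - lam ^ s) ≤ lam ^ (-σ) := by
  have hfrac : (s + σ) / s = 1 + σ / s := by field_simp
  have hpow : lam ^ (-σ) = (lam ^ s)⁻¹ ^ (σ / s) := by
    rw [← rpow_neg hlam0.le, ← rpow_mul hlam0.le]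
    field_simp
  constructor
  · exact mul_nonneg (div_nonneg (by linarith) hs.le)
      (sub_nonneg.mpr (rpow_le_one hlam0.le hlam1 hs.le))
  · rw [hfrac, hpow]
    exact one_add_mul_one_sub_le_inv_rpow (rpow_pos_of_pos hlam0 s) ((one_le_div hs).mpr hsσ)

/-- Lemma (futoushiki1): for `0 < λ ≤ 1` and `0 < s ≤ σ ≤ 1`,
`0 ≤ ((s + σ)/s) * (1 - λ^s)` and `((s + σ)/s) * (1 - λ^s) ≤ λ^(-σ)`,
where powers are real powers (`Real.rpow`). -/
theorem stmt_0 (lam s σ : ℝ) (hlam0 : 0 < lam) (hlam1 : lam ≤ 1)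
    (hs : 0 < s) (hsσ : s ≤ σ) (hσ : σ ≤ 1) :
    0 ≤ ((s + σ) / s) * (1 - lam ^ s) ∧
      ((s + σ) / s) * (1 - lam ^ s) ≤ lam ^ (-σ) :=
  stmt_0_general lam s σ hlam0 hlam1 hs hsσ
end

section
/- Let H be a Hermitian n×n complex matrix and A an arbitrary n×n complex matrix. Then 0 ≤ Re(trace( exp(−H) · (A·exp(H) − exp(H)·A) · (A·H − H·A)ᴴ )), where exp denotes the matrix exponential and ᴴ the conjugate transpose. -/
/-!
Diagonalise `H = U D U*` with `U` unitary and `D = diag(λ)` real. The pairing is invariant under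
conjugating `H` and `A` by the same unitary, so one may take `H = D`; writing `b = U* A U`, it
then equals `∑ i j, (λⱼ - λᵢ) (exp (λⱼ - λᵢ) - 1) |bᵢⱼ|²`, a sum of nonnegative terms because
`t (exp t - 1) ≥ 0` for every real `t`.
-/

open Matrix Unitary NormedSpace ComplexConjugate

theorem Real.mul_exp_sub_one_nonneg (t : ℝ) : 0 ≤ t * (Real.exp t - 1) := by
  rcases le_total 0 t with ht | ht
  · exact mul_nonneg ht (sub_nonneg.mpr (Real.one_le_exp ht))
  · exact mul_nonneg_of_nonpos_of_nonpos ht (sub_nonpos.mpr (Real.exp_le_one_iff.mpr ht))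

namespace Matrix

section

variable {n : Type*} [Fintype n]

theorem trace_mul_conjTranspose {R : Type*} [NonUnitalSemiring R] [StarRing R]
    (P Q : Matrix n n R) : (P * Qᴴ).trace = ∑ i, ∑ j, P i j * star (Q i j) := by
  simp [trace, mul_apply]

variable [DecidableEq n]

theorem commutator_diagonal_apply {R : Type*} [CommRing R] (B : Matrix n n R) (d : n → R)
    (i j : n) : (B * diagonal d - diagonal d * B) i j = (d j - d i) * B i j := by
  simp only [sub_apply, mul_diagonal, diagonal_mul]
  ring

variable {𝕜 : Type*} [RCLike 𝕜]

theorem exp_diagonal_ofReal (d : n → ℝ) :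
    exp (diagonal (RCLike.ofReal ∘ d) : Matrix n n 𝕜) =
      diagonal (RCLike.ofReal ∘ Real.exp ∘ d) := by
  rw [exp_diagonal]
  congr 1
  funext i
  rw [Pi.coe_exp, Real.exp_eq_exp_ℝ]
  exact (algebraMap_exp_comm (d i)).symm

theorem exp_conjStarAlgAut (u : unitary (Matrix n n 𝕜)) (X : Matrix n n 𝕜) :
    exp (conjStarAlgAut 𝕜 _ u X) = conjStarAlgAut 𝕜 _ u (exp X) :=
  exp_units_conj (toUnits u) X

theorem trace_conjStarAlgAut (u : unitary (Matrix n n 𝕜)) (X : Matrix n n 𝕜) :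
    (conjStarAlgAut 𝕜 _ u X).trace = X.trace := by
  rw [conjStarAlgAut_apply, trace_mul_cycle, Unitary.coe_star_mul_self, one_mul]

/-- With `f = exp H`, this is `tr (f⁻¹ [A, f] [A, log f]ᴴ)`. -/
noncomputable def expCommutatorPairing (H A : Matrix n n 𝕜) : 𝕜 :=
  (exp (-H) * (A * exp H - exp H * A) * (A * H - H * A)ᴴ).trace

theorem expCommutatorPairing_conjStarAlgAut (u : unitary (Matrix n n 𝕜))
    (H A : Matrix n n 𝕜) :
    expCommutatorPairing (conjStarAlgAut 𝕜 _ u H) (conjStarAlgAut 𝕜 _ u A) =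
      expCommutatorPairing H A := by
  simp only [expCommutatorPairing, ← map_neg, exp_conjStarAlgAut, ← map_mul, ← map_sub,
    ← star_eq_conjTranspose, ← map_star, trace_conjStarAlgAut]

theorem expCommutatorPairing_diagonal (d : n → ℝ) (B : Matrix n n 𝕜) :
    expCommutatorPairing (diagonal (RCLike.ofReal ∘ d)) B =
      ((∑ i, ∑ j, (d j - d i) * (Real.exp (d j - d i) - 1) * ‖B i j‖ ^ 2 : ℝ) : 𝕜) := by
  have hneg :
      -diagonal (RCLike.ofReal ∘ d) = (diagonal (RCLike.ofReal ∘ (-d)) : Matrix n n 𝕜) := by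
    rw [diagonal_neg]; simp
  rw [expCommutatorPairing, hneg, exp_diagonal_ofReal, exp_diagonal_ofReal,
    trace_mul_conjTranspose, RCLike.ofReal_sum]
  refine Finset.sum_congr rfl fun i _ => ?_
  rw [RCLike.ofReal_sum]
  refine Finset.sum_congr rfl fun j _ => ?_
  rw [diagonal_mul, commutator_diagonal_apply, commutator_diagonal_apply]
  generalize B i j = b
  have hexp :
      Real.exp (-d i) * (Real.exp (d j) - Real.exp (d i)) = Real.exp (d j - d i) - 1 := by
    rw [mul_sub, ← Real.exp_add, ← Real.exp_add, neg_add_cancel, Real.exp_zero, neg_add_eq_sub]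
  simp only [Function.comp_apply, Pi.neg_apply]
  rw [star_mul', RCLike.star_def, map_sub, RCLike.conj_ofReal, RCLike.conj_ofReal]
  calc _ = ((Real.exp (-d i) * (Real.exp (d j) - Real.exp (d i)) * (d j - d i) : ℝ) : 𝕜) *
        (b * conj b) := by push_cast; ring
    _ = _ := by rw [hexp, RCLike.mul_conj]; push_cast; ring

theorem IsHermitian.re_expCommutatorPairing_nonneg {H : Matrix n n 𝕜} (hH : H.IsHermitian)
    (A : Matrix n n 𝕜) : 0 ≤ RCLike.re (expCommutatorPairing H A) := by
  set φ := conjStarAlgAut 𝕜 _ hH.eigenvectorUnitary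
  have hdiag := expCommutatorPairing_conjStarAlgAut hH.eigenvectorUnitary
    (diagonal (RCLike.ofReal ∘ hH.eigenvalues)) (φ.symm A)
  rw [← hH.spectral_theorem, φ.apply_symm_apply, expCommutatorPairing_diagonal] at hdiag
  rw [hdiag, RCLike.ofReal_re]
  exact Finset.sum_nonneg fun i _ => Finset.sum_nonneg fun j _ =>
    mul_nonneg (Real.mul_exp_sub_one_nonneg _) (sq_nonneg _)

end

end Matrix

open Matrix NormedSpace in
/-- For a Hermitian matrix `H` and any matrix `A`,
`0 ≤ Re tr(exp(−H)·(A·exp(H) − exp(H)·A)·(A·H − H·A)ᴴ)`. -/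
theorem stmt_8 {n : ℕ} (H A : Matrix (Fin n) (Fin n) ℂ) (hH : Hᴴ = H) :
    0 ≤ (((NormedSpace.exp (-H)) * (A * NormedSpace.exp H - NormedSpace.exp H * A) * (A * H - H * A)ᴴ).trace).re :=
  IsHermitian.re_expCommutatorPairing_nonneg hH A
end

section
/- Let H be a Hermitian n×n complex matrix, A an arbitrary n×n complex matrix, and σ a real number with 0 ≤ σ ≤ 1. Then Re(trace( exp(−σ·H) · (A·exp(σ·H) − exp(σ·H)·A) · (A·exp(σ·H) − exp(σ·H)·A)ᴴ )) ≤ Re(trace( exp(−H) · (A·exp(H) − exp(H)·A) · (A·exp(σ·H) − exp(σ·H)·A)ᴴ )), where exp denotes the matrix exponential, σ·H is the scalar multiple of H, and ᴴ the conjugate transpose. -/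
open Matrix NormedSpace Complex in
private lemma stmt9_key0 (u v : ℝ) (h : 0 ≤ (u - 1) * (v - u)) :
    (u - 1)^2 ≤ (v - 1) * (u - 1) := by nlinarith

open Matrix NormedSpace Complex in
private lemma stmt9_key_real (a b σ : ℝ) (h0 : 0 ≤ σ) (h1 : σ ≤ 1) :
    Real.exp (-σ * a) * (Real.exp (σ * b) - Real.exp (σ * a))^2 ≤
      Real.exp (-1 * a) * ((Real.exp (1 * b) - Real.exp (1 * a)) *
        (Real.exp (σ * b) - Real.exp (σ * a))) := by
  set u := Real.exp (σ * (b - a)) with hu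
  set v := Real.exp (b - a) with hv
  have e1 : Real.exp (σ * b) = Real.exp (σ * a) * u := by rw [hu, ← Real.exp_add]; ring_nf
  have e2 : Real.exp b = Real.exp a * v := by rw [hv, ← Real.exp_add]; ring_nf
  have e3 : Real.exp (-σ * a) * Real.exp (σ * a) = 1 := by
    rw [← Real.exp_add]; ring_nf; exact Real.exp_zero
  have e4 : Real.exp (-a) * Real.exp a = 1 := by
    rw [← Real.exp_add]; ring_nf; exact Real.exp_zero
  have hkey : 0 ≤ (u - 1) * (v - u) := by
    rcases le_total a b with hab | hab
    · have h1' : 1 ≤ u := Real.one_le_exp (by nlinarith)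
      have h2' : u ≤ v := Real.exp_le_exp.2 (by nlinarith)
      nlinarith
    · have h1' : u ≤ 1 := Real.exp_le_one_iff.2 (by nlinarith)
      have h2' : v ≤ u := Real.exp_le_exp.2 (by nlinarith)
      nlinarith
  have hmain := stmt9_key0 u v hkey
  have hq : 0 < Real.exp (σ * a) := Real.exp_pos _
  calc Real.exp (-σ * a) * (Real.exp (σ * b) - Real.exp (σ * a))^2
      = Real.exp (σ * a) * (u - 1)^2 := by
        rw [e1]
        have : (Real.exp (σ*a) * u - Real.exp (σ*a))^2 = Real.exp (σ*a)^2 * (u-1)^2 := by ring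
        rw [this]; nlinarith [Real.exp_pos (-σ*a)]
    _ ≤ Real.exp (σ * a) * ((v - 1) * (u - 1)) := by nlinarith
    _ = Real.exp (-1 * a) * ((Real.exp (1 * b) - Real.exp (1 * a)) *
          (Real.exp (σ * b) - Real.exp (σ * a))) := by
        simp only [one_mul, neg_mul]
        rw [e1, show Real.exp b = Real.exp a * v from e2]
        have hr : Real.exp (-a) * ((Real.exp a * v - Real.exp a) *
              (Real.exp (σ*a)*u - Real.exp (σ*a)))
            = (Real.exp (-a) * Real.exp a) * (Real.exp (σ*a) * ((v-1)*(u-1))) := by ring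
        rw [hr, e4, one_mul]

open Matrix NormedSpace Complex in
private lemma stmt9_term_re (e xd yd : ℝ) (z : ℂ) :
    ((e:ℂ) * (z * xd) * (starRingEnd ℂ) (z * yd)).re = e * (xd*yd) * Complex.normSq z := by
  simp [_root_.map_mul, Complex.conj_ofReal, Complex.normSq_apply, Complex.mul_re,
    Complex.mul_im]
  ring

open Matrix NormedSpace Complex in
private lemma stmt9_trace_diag {n : ℕ} (e : Fin n → ℂ) (X Y : Matrix (Fin n) (Fin n) ℂ) :
    (diagonal e * X * Yᴴ).trace = ∑ i, ∑ j, e i * X i j * (starRingEnd ℂ) (Y i j) := by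
  simp [Matrix.trace, Matrix.mul_apply, Matrix.conjTranspose_apply, Matrix.diagonal_apply,
    Finset.mul_sum, ite_mul, mul_assoc]

open Matrix NormedSpace Complex in
private lemma stmt9_comm_entry {n : ℕ} (B : Matrix (Fin n) (Fin n) ℂ) (g : Fin n → ℂ)
    (i j : Fin n) :
    (B * diagonal g - diagonal g * B) i j = B i j * (g j - g i) := by
  simp [Matrix.sub_apply, Matrix.mul_diagonal, Matrix.diagonal_mul]; ring

open Matrix NormedSpace Complex in
private lemma stmt9_main_re {n : ℕ} (B : Matrix (Fin n) (Fin n) ℂ) (μ : Fin n → ℝ) (τ ρ : ℝ) :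
    ((diagonal (fun i => (Real.exp (-τ * μ i) : ℂ)) *
        (B * diagonal (fun i => (Real.exp (τ * μ i) : ℂ)) -
          diagonal (fun i => (Real.exp (τ * μ i) : ℂ)) * B) *
        (B * diagonal (fun i => (Real.exp (ρ * μ i) : ℂ)) -
          diagonal (fun i => (Real.exp (ρ * μ i) : ℂ)) * B)ᴴ).trace).re
    = ∑ i, ∑ j, Real.exp (-τ * μ i) *
        ((Real.exp (τ * μ j) - Real.exp (τ * μ i)) *
          (Real.exp (ρ * μ j) - Real.exp (ρ * μ i))) *
        Complex.normSq (B i j) := by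
  rw [stmt9_trace_diag, Complex.re_sum]
  refine Finset.sum_congr rfl fun i _ => ?_
  rw [Complex.re_sum]
  refine Finset.sum_congr rfl fun j _ => ?_
  rw [stmt9_comm_entry, stmt9_comm_entry]
  have h1 : ((Real.exp (τ * μ j) : ℂ) - (Real.exp (τ * μ i) : ℂ)) =
      ((Real.exp (τ * μ j) - Real.exp (τ * μ i) : ℝ) : ℂ) := by push_cast; ring
  have h2 : ((Real.exp (ρ * μ j) : ℂ) - (Real.exp (ρ * μ i) : ℂ)) =
      ((Real.exp (ρ * μ j) - Real.exp (ρ * μ i) : ℝ) : ℂ) := by push_cast; ring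
  rw [h1, h2, stmt9_term_re]

open Matrix NormedSpace Complex in
private lemma stmt9_exp_eigen {n : ℕ} (H : Matrix (Fin n) (Fin n) ℂ) (hA : H.IsHermitian)
    (τ : ℝ) :
    exp (τ • H) =
      (hA.eigenvectorUnitary : Matrix (Fin n) (Fin n) ℂ) *
        diagonal (fun i => (Real.exp (τ * hA.eigenvalues i) : ℂ)) *
        (hA.eigenvectorUnitary : Matrix (Fin n) (Fin n) ℂ)ᴴ := by
  set U : Matrix (Fin n) (Fin n) ℂ := (hA.eigenvectorUnitary : Matrix (Fin n) (Fin n) ℂ)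
    with hUdef
  have hU1 : Uᴴ * U = 1 := by
    rw [← Matrix.star_eq_conjTranspose]
    exact Matrix.mem_unitaryGroup_iff'.mp hA.eigenvectorUnitary.2
  have hU2 : U * Uᴴ = 1 := by
    rw [← Matrix.star_eq_conjTranspose]
    exact Matrix.mem_unitaryGroup_iff.mp hA.eigenvectorUnitary.2
  have hinv : U⁻¹ = Uᴴ := Matrix.inv_eq_left_inv hU1
  have hUnit : IsUnit U := ⟨⟨U, Uᴴ, hU2, hU1⟩, rfl⟩
  have hD : τ • diagonal ((RCLike.ofReal ∘ hA.eigenvalues : Fin n → ℂ))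
      = diagonal fun i => ((τ * hA.eigenvalues i : ℝ) : ℂ) := by
    ext i j
    by_cases h : i = j <;> simp [h, Matrix.diagonal_apply, Complex.real_smul]
  have hexpv : (exp fun i => ((τ * hA.eigenvalues i : ℝ) : ℂ))
      = fun i => ((Real.exp (τ * hA.eigenvalues i) : ℝ) : ℂ) := by
    funext i
    rw [Pi.coe_exp, ← Complex.exp_eq_exp_ℂ, ← Complex.ofReal_exp]
  have hsmul : τ • H = U * (diagonal fun i => ((τ * hA.eigenvalues i : ℝ) : ℂ)) * U⁻¹ := by
    rw [hinv]
    conv_lhs => rw [hA.spectral_theorem]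
    rw [Unitary.conjStarAlgAut_apply, Matrix.star_eq_conjTranspose, ← hUdef, ← smul_mul_assoc, ← mul_smul_comm, hD]
  rw [hsmul, Matrix.exp_conj U _ hUnit, Matrix.exp_diagonal, hinv, hexpv]

open Matrix NormedSpace in
/-- For a Hermitian matrix `H`, any matrix `A`, and `0 ≤ σ ≤ 1`,
`Re tr(exp(−σH)·[A, exp(σH)]·[A, exp(σH)]ᴴ) ≤ Re tr(exp(−H)·[A, exp(H)]·[A, exp(σH)]ᴴ)`. -/
theorem stmt_9 {n : ℕ} (H A : Matrix (Fin n) (Fin n) ℂ) (hH : Hᴴ = H)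
    (σ : ℝ) (h0 : 0 ≤ σ) (h1 : σ ≤ 1) :
    (((exp (-(σ • H))) * (A * exp (σ • H) - exp (σ • H) * A) *
        (A * exp (σ • H) - exp (σ • H) * A)ᴴ).trace).re ≤
      (((exp (-H)) * (A * exp H - exp H * A) *
        (A * exp (σ • H) - exp (σ • H) * A)ᴴ).trace).re := by
  have hA : H.IsHermitian := hH
  set U : Matrix (Fin n) (Fin n) ℂ := (hA.eigenvectorUnitary : Matrix (Fin n) (Fin n) ℂ)
    with hUdef
  set μ : Fin n → ℝ := hA.eigenvalues with hμ
  have hU1 : Uᴴ * U = 1 := by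
    rw [← Matrix.star_eq_conjTranspose]
    exact Matrix.mem_unitaryGroup_iff'.mp hA.eigenvectorUnitary.2
  have hU2 : U * Uᴴ = 1 := by
    rw [← Matrix.star_eq_conjTranspose]
    exact Matrix.mem_unitaryGroup_iff.mp hA.eigenvectorUnitary.2
  have hexp : ∀ τ : ℝ, exp (τ • H)
      = U * diagonal (fun i => (Real.exp (τ * μ i) : ℂ)) * Uᴴ := fun τ =>
    stmt9_exp_eigen H hA τ
  set B : Matrix (Fin n) (Fin n) ℂ := Uᴴ * A * U with hBdef
  have conj_mul : ∀ X Y : Matrix (Fin n) (Fin n) ℂ,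
      (U * X * Uᴴ) * (U * Y * Uᴴ) = U * (X * Y) * Uᴴ := by
    intro X Y
    simp only [Matrix.mul_assoc]
    rw [← Matrix.mul_assoc Uᴴ U, hU1, Matrix.one_mul]
  have hAeq : A = U * B * Uᴴ := by
    rw [hBdef]
    simp only [Matrix.mul_assoc]
    rw [hU2, Matrix.mul_one, ← Matrix.mul_assoc, hU2, Matrix.one_mul]
  have hcomm : ∀ D : Matrix (Fin n) (Fin n) ℂ,
      A * (U * D * Uᴴ) - (U * D * Uᴴ) * A = U * (B * D - D * B) * Uᴴ := by
    intro D
    conv_lhs => rw [hAeq]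
    rw [conj_mul, conj_mul, Matrix.mul_sub, Matrix.sub_mul]
  have hct : ∀ C : Matrix (Fin n) (Fin n) ℂ, (U * C * Uᴴ)ᴴ = U * Cᴴ * Uᴴ := by
    intro C
    simp [Matrix.conjTranspose_mul, Matrix.mul_assoc]
  have htr : ∀ M : Matrix (Fin n) (Fin n) ℂ, (U * M * Uᴴ).trace = M.trace := by
    intro M
    rw [Matrix.trace_mul_cycle, hU1, Matrix.one_mul]
  have g1 : exp (σ • H) = U * diagonal (fun i => (Real.exp (σ * μ i) : ℂ)) * Uᴴ := hexp σ
  have g2 : exp (-(σ • H)) = U * diagonal (fun i => (Real.exp (-σ * μ i) : ℂ)) * Uᴴ := by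
    rw [← neg_smul]; exact hexp (-σ)
  have g3 : exp H = U * diagonal (fun i => (Real.exp (1 * μ i) : ℂ)) * Uᴴ := by
    rw [show H = (1 : ℝ) • H by rw [one_smul]]; exact hexp 1
  have g4 : exp (-H) = U * diagonal (fun i => (Real.exp (-1 * μ i) : ℂ)) * Uᴴ := by
    rw [show -H = (-1 : ℝ) • H by rw [neg_smul, one_smul]]; exact hexp (-1)
  rw [g1, g2, g3, g4, hcomm, hcomm, hct, conj_mul, conj_mul, conj_mul, conj_mul, htr, htr,
    stmt9_main_re B μ σ σ, stmt9_main_re B μ 1 σ]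
  refine Finset.sum_le_sum fun i _ => Finset.sum_le_sum fun j _ => ?_
  have hk := stmt9_key_real (μ i) (μ j) σ h0 h1
  nlinarith [Complex.normSq_nonneg (B i j),
    mul_le_mul_of_nonneg_right hk (Complex.normSq_nonneg (B i j))]
end
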